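/- For every odd cycle C_{2n+1} with n ≥ 1, QEC(C_{2n+1}) = -1/(4 cos²(π/(2n+1))). -/

import Mathlib

/-- Cyclic distance on the cycle C_m with vertices identified with Fin m. -/
def cycDist (m : ℕ) (i j : Fin m) : ℕ :=
  min ((i.val + m - j.val) % m) ((j.val + m - i.val) % m)

namespace QECaux

open Finset Complex


noncomputable def zet (m : ℕ) : ℂ := Complex.exp (2 * Real.pi * Complex.I / m)

lemma zet_prim (m : ℕ) (hm : m ≠ 0) : IsPrimitiveRoot (zet m) m :=
  Complex.isPrimitiveRoot_exp m hm

lemma zet_ne (m : ℕ) : zet m ≠ 0 := Complex.exp_ne_zero _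

lemma zet_zpow_one (m : ℕ) (hm : m ≠ 0) {t : ℤ} (h : (m:ℤ) ∣ t) : zet m ^ t = 1 := by
  obtain ⟨c, rfl⟩ := h
  rw [zpow_mul]
  have : zet m ^ (m:ℤ) = 1 := by
    rw [zpow_natCast, (zet_prim m hm).pow_eq_one]
  rw [this, one_zpow]

lemma zet_zpow_ne_one (m : ℕ) (hm : m ≠ 0) {t : ℤ} (h : ¬ (m:ℤ) ∣ t) : zet m ^ t ≠ 1 := by
  intro h1
  exact h (((zet_prim m hm).zpow_eq_one_iff_dvd t).mp h1)

lemma sum_zet (m : ℕ) (hm : m ≠ 0) (t : ℤ) :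
    ∑ k ∈ range m, zet m ^ (t * k) = if (m:ℤ) ∣ t then (m:ℂ) else 0 := by
  split_ifs with h
  · have : ∀ k ∈ range m, zet m ^ (t * (k:ℤ)) = 1 := by
      intro k _
      exact zet_zpow_one m hm (Dvd.dvd.mul_right h k)
    rw [Finset.sum_congr rfl this]
    simp
  · set w : ℂ := zet m ^ t with hw
    have hterm : ∀ k ∈ range m, zet m ^ (t * (k:ℤ)) = w ^ k := by
      intro k _
      rw [hw, ← zpow_natCast (zet m ^ t) k, ← zpow_mul]
    rw [Finset.sum_congr rfl hterm]
    have hw1 : w ≠ 1 := zet_zpow_ne_one m hm h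
    have hwm : w ^ m = 1 := by
      rw [hw, ← zpow_natCast (zet m ^ t) m, ← zpow_mul, mul_comm, zpow_mul,
        zpow_natCast, (zet_prim m hm).pow_eq_one, one_zpow]
    rw [geom_sum_eq hw1, hwm]
    simp



def dd (m r : ℕ) : ℕ := min r (m - r)

lemma mod_diff (m a b : ℕ) (ha : a < m) (hb : b < m) (h : b ≤ a) :
    (a + m - b) % m = a - b := by
  have h1 : a + m - b = (a - b) + m := by omega
  have h2 : a - b < m := by omega
  rw [h1, Nat.add_mod_right, Nat.mod_eq_of_lt h2]

lemma cyc_eq (m : ℕ) (i l : Fin m) :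
    cycDist m i l = dd m ((l.val + m - i.val) % m) := by
  have hi := i.isLt
  have hl := l.isLt
  unfold cycDist dd
  rcases lt_trichotomy i.val l.val with h | h | h
  · rw [mod_diff m l.val i.val hl hi h.le,
      Nat.mod_eq_of_lt (show i.val + m - l.val < m by omega)]
    omega
  · rw [h]
    simp
  · rw [mod_diff m i.val l.val hi hl h.le,
      Nat.mod_eq_of_lt (show l.val + m - i.val < m by omega)]
    omega

lemma sum_id_mul (x : ℂ) (N : ℕ) :
    (1 - x)^2 * ∑ r ∈ range (N+1), (r:ℂ) * x^r
      = x - (N+1)*x^(N+1) + N*x^(N+2) := by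
  induction N with
  | zero => simp
  | succ N ih =>
    rw [Finset.sum_range_succ, mul_add, ih]
    push_cast
    ring




lemma lam_id (n : ℕ) (ω : ℂ) (hωm : ω^(2*n+1) = 1) :
    (1-ω)^2 * ∑ r ∈ range (2*n+1), (dd (2*n+1) r : ℂ) * ω^r
      = 2*ω - ω^(n+1) - ω^(n+2) := by
  have hω0 : ω ≠ 0 := by
    rintro rfl
    simp at hωm
  have hsplit : ∑ r ∈ range (2*n+1), (dd (2*n+1) r : ℂ) * ω^r
      = (∑ r ∈ range (n+1), (r:ℂ) * ω^r)
        + ∑ r ∈ range (n+1), (r:ℂ) * (ω⁻¹)^r := by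
    set D : ℕ → ℕ := dd (2*n+1) with hD
    have h2 : (2*n+1) = (n+1) + n := by ring
    rw [h2, Finset.sum_range_add]
    congr 1
    · apply Finset.sum_congr rfl
      intro r hr
      have hr' : r < n + 1 := Finset.mem_range.mp hr
      have : D r = r := by rw [hD]; unfold dd; omega
      rw [this]
    · -- ∑ t ∈ range n, dd (n+1+t) ω^(n+1+t) = ∑ t ∈ range (n+1), t * (ω⁻¹)^t
      have hstep : ∑ t ∈ range n, (D ((n+1)+t) : ℂ) * ω^((n+1)+t)
          = ∑ t ∈ range (n+1), ((n-t : ℕ) : ℂ) * ω^((n+1)+t) := by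
        rw [Finset.sum_range_succ]
        simp only [Nat.sub_self, Nat.cast_zero, zero_mul, add_zero]
        apply Finset.sum_congr rfl
        intro t ht
        have ht' : t < n := Finset.mem_range.mp ht
        have : D ((n+1)+t) = n - t := by rw [hD]; unfold dd; omega
        rw [this]
      rw [hstep, ← Finset.sum_range_reflect]
      apply Finset.sum_congr rfl
      intro t ht
      have ht' : t < n + 1 := Finset.mem_range.mp ht
      have e1 : n + 1 - 1 - t = n - t := by omega
      have e2 : n - (n - t) = t := by omega
      rw [e1, e2]
      congr 1
      have hexp : (n+1) + (n - t) + t = 2*n+1 := by omega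
      have : ω^((n+1)+(n-t)) * ω^t = 1 := by
        rw [← pow_add, hexp, hωm]
      rw [inv_pow]
      exact eq_inv_of_mul_eq_one_left this
  rw [hsplit, mul_add, sum_id_mul]
  have key : (1-ω)^2 * ∑ r ∈ range (n+1), (r:ℂ) * (ω⁻¹)^r
      = ω^2 * (ω⁻¹ - (n+1)*(ω⁻¹)^(n+1) + n*(ω⁻¹)^(n+2)) := by
    rw [← sum_id_mul ω⁻¹]
    have h : (1-ω)^2 = ω^2 * (1-ω⁻¹)^2 := by
      have hu : ω * ω⁻¹ = 1 := mul_inv_cancel₀ hω0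
      linear_combination (-ω*ω⁻¹ + 2*ω - 1) * hu
    rw [h]
    ring
  rw [key]
  have hu : ω * ω⁻¹ = 1 := mul_inv_cancel₀ hω0
  have h1 : ω^(n+1) * (ω⁻¹)^(n+1) = 1 := by rw [← mul_pow, hu, one_pow]
  have h2 : ω^(n+2) * (ω⁻¹)^(n+2) = 1 := by rw [← mul_pow, hu, one_pow]
  have hab : ω^(n+1) * ω^(n+2) = ω^2 := by
    rw [← pow_add]
    have : (n+1)+(n+2) = (2*n+1) + 2 := by ring
    rw [this, pow_add, hωm, one_mul]
  linear_combination ω * hu - ((n:ℂ)+1)*ω^(n+2)*h1 + ((n:ℂ)+1)*(ω⁻¹)^(n+1)*hab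
    + (n:ℂ)*ω^(n+1)*h2 - (n:ℂ)*(ω⁻¹)^(n+2)*hab





noncomputable def Lam (m j : ℕ) : ℂ := ∑ r ∈ range m, (dd m r : ℂ) * (zet m ^ j)^r


lemma lam_real (n : ℕ) (hn : 1 ≤ n) (j : ℕ) (hj1 : 1 ≤ j) (hj2 : j ≤ 2*n) :
    Lam (2*n+1) j
      = ((-1/(2*(1 + (-1)^j * Real.cos (Real.pi*j/((2*n+1:ℕ):ℝ)))) : ℝ) : ℂ) := by
  set m : ℕ := 2*n+1 with hm
  have hm0 : m ≠ 0 := by omega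
  have hmC : (m:ℂ) ≠ 0 := Nat.cast_ne_zero.mpr hm0
  have hmR : (m:ℝ) ≠ 0 := Nat.cast_ne_zero.mpr hm0
  set θ : ℝ := Real.pi*j/m with hθ
  set c : ℝ := Real.cos θ with hc
  set s : ℝ := Real.sin θ with hs
  set ε : ℝ := (-1)^j with hε
  have hπ := Real.pi_pos
  have hθpos : 0 < θ := by
    apply div_pos (by positivity)
    positivity
  have hθlt : θ < Real.pi := by
    rw [hθ, div_lt_iff₀ (by positivity)]
    have : (j:ℝ) < m := by exact_mod_cast (by omega : j < m)
    nlinarith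
  have hspos : 0 < s := Real.sin_pos_of_pos_of_lt_pi hθpos hθlt
  have hsc : s^2 + c^2 = 1 := Real.sin_sq_add_cos_sq θ
  have hclt : |c| < 1 := by
    rw [abs_lt]
    constructor <;> nlinarith
  have hden : 0 < 1 + ε*c := by
    have h1 : |ε*c| < 1 := by
      rw [abs_mul, hε]
      simp [abs_pow]
      exact hclt
    rw [abs_lt] at h1
    linarith [h1.1]
  set e : ℂ := Complex.exp (θ * Complex.I) with he
  have heval : e = (c:ℂ) + (s:ℂ) * Complex.I := by
    rw [he, Complex.exp_mul_I, Complex.ofReal_cos, Complex.ofReal_sin]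
  set ω : ℂ := zet m ^ j with hω
  have hωe : ω = e^2 := by
    rw [hω, he, zet, ← Complex.exp_nat_mul, ← Complex.exp_nat_mul]
    congr 1
    push_cast [hθ]
    field_simp
  have hem : e^m = (ε:ℂ) := by
    rw [he, ← Complex.exp_nat_mul]
    have hθm : θ * m = Real.pi * j := by
      rw [hθ]
      field_simp
    have harg : (m:ℂ) * ((θ:ℝ) * Complex.I) = (j:ℂ) * (Real.pi * Complex.I) := by
      calc (m:ℂ) * ((θ:ℝ) * Complex.I) = ((θ * m : ℝ) : ℂ) * Complex.I := by push_cast; ring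
        _ = (j:ℂ) * (Real.pi * Complex.I) := by rw [hθm]; push_cast; ring
    rw [harg, Complex.exp_nat_mul, Complex.exp_pi_mul_I, hε]
    push_cast
    ring
  have hωm : ω^m = 1 := by
    rw [hω, ← pow_mul, mul_comm, pow_mul, (zet_prim m hm0).pow_eq_one, one_pow]
  have hω1 : ω ≠ 1 := by
    rw [hω]
    intro h
    have := ((zet_prim m hm0).pow_eq_one_iff_dvd j).mp h
    have := Nat.le_of_dvd (by omega) this
    omega
  have hid := lam_id n ω hωm
  have hLam : (1-ω)^2 * Lam m j = 2*ω - ω^(n+1) - ω^(n+2) := hid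
  have hfac : (1-ω)^2 ≠ 0 := pow_ne_zero _ (sub_ne_zero.mpr (Ne.symm hω1))
  apply mul_left_cancel₀ hfac
  rw [hLam]
  -- rewrite powers of ω in terms of e
  have hcast : ∀ x : ℝ, ((x:ℝ):ℂ) = (x:ℂ) := fun _ => rfl
  have hP : e^2 - 2*(c:ℂ)*e + 1 = 0 := by
    rw [heval]
    have hIC : Complex.I^2 = -1 := Complex.I_sq
    have hscC : (s:ℂ)^2 + (c:ℂ)^2 = 1 := by exact_mod_cast congrArg (Complex.ofReal) hsc
    linear_combination (s:ℂ)^2 * hIC - hscC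
  have hεC : ((ε:ℝ):ℂ)^2 = 1 := by
    rw [hε]
    push_cast
    rw [← pow_mul, mul_comm, pow_mul]
    norm_num
  have hn1 : ω^(n+1) = (ε:ℂ) * e := by
    rw [hωe, ← pow_mul]
    have h1 : 2*(n+1) = m + 1 := by omega
    rw [h1, pow_succ, hem]
  have hn2 : ω^(n+2) = (ε:ℂ) * e^3 := by
    rw [hωe, ← pow_mul]
    have h1 : 2*(n+2) = m + 3 := by omega
    rw [h1, pow_add, hem]
  rw [hn1, hn2, hωe]
  -- goal : (1-e^2)^2 * ↑μ = 2*e^2 - ε*e - ε*e^3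
  have hdenC : ((2*(1 + ε*c) : ℝ) : ℂ) ≠ 0 := by
    exact_mod_cast (by positivity : (2*(1+ε*c):ℝ) ≠ 0)
  have key : ((-1/(2*(1+ε*c)) : ℝ) : ℂ) = -1 / ((2*(1+ε*c):ℝ):ℂ) := by push_cast; ring
  rw [key, mul_comm ((1-e^2)^2), div_mul_eq_mul_div, eq_comm, div_eq_iff hdenC]
  push_cast
  linear_combination (-(e^2) + 2*(ε:ℂ)*e - 1) * hP + (2*(c:ℂ)*e + 2*(c:ℂ)*e^3) * hεC


lemma cos_helper (m k : ℕ) (hm : 3 ≤ m) (h2 : 2 ≤ k) (hk : k ≤ m) :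
    Real.cos (Real.pi*k/m) ≤ Real.cos (2*Real.pi/m) := by
  have hπ := Real.pi_pos
  have hmR : (0:ℝ) < m := by exact_mod_cast (by omega : 0 < m)
  apply Real.cos_le_cos_of_nonneg_of_le_pi
  · positivity
  · rw [div_le_iff₀ hmR]
    have : (k:ℝ) ≤ m := by exact_mod_cast hk
    nlinarith
  · rw [div_le_div_iff_of_pos_right hmR]
    have : (2:ℝ) ≤ k := by exact_mod_cast h2
    nlinarith

lemma den_eq (m : ℕ) (hm : 3 ≤ m) :
    1 + Real.cos (2*Real.pi/m) = 2 * Real.cos (Real.pi/m)^2 := by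
  have h : (2:ℝ)*Real.pi/m = 2*(Real.pi/m) := by ring
  rw [h, Real.cos_two_mul]
  ring

lemma cos_m_pos (m : ℕ) (hm : 3 ≤ m) : 0 < Real.cos (Real.pi/m) := by
  have hπ := Real.pi_pos
  have hmR : (0:ℝ) < m := by exact_mod_cast (by omega : 0 < m)
  apply Real.cos_pos_of_mem_Ioo
  constructor
  · have : (0:ℝ) < Real.pi/m := by positivity
    linarith
  · rw [div_lt_iff₀ hmR]
    have : (3:ℝ) ≤ m := by exact_mod_cast hm
    nlinarith

lemma b_core (n : ℕ) (hn : 1 ≤ n) (j : ℕ) (hj1 : 1 ≤ j) (hj2 : j ≤ 2*n) :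
    (-1:ℝ) < (-1)^j * Real.cos (Real.pi*j/((2*n+1:ℕ):ℝ))
    ∧ (-1)^j * Real.cos (Real.pi*j/((2*n+1:ℕ):ℝ)) ≤ Real.cos (2*Real.pi/((2*n+1:ℕ):ℝ)) := by
  set m : ℕ := 2*n+1 with hmdef
  have hm : 3 ≤ m := by omega
  have hπ := Real.pi_pos
  have hmR : (0:ℝ) < m := by exact_mod_cast (by omega : 0 < m)
  have hθpos : 0 < Real.pi*j/(m:ℝ) := by
    have : (0:ℝ) < j := by exact_mod_cast hj1
    positivity
  have hθlt : Real.pi*j/(m:ℝ) < Real.pi := by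
    rw [div_lt_iff₀ hmR]
    have : (j:ℝ) < m := by exact_mod_cast (by omega : j < m)
    nlinarith
  have habs : |Real.cos (Real.pi*j/(m:ℝ))| < 1 := by
    have hs := Real.sin_pos_of_pos_of_lt_pi hθpos hθlt
    have hsc := Real.sin_sq_add_cos_sq (Real.pi*j/(m:ℝ))
    rw [abs_lt]
    constructor <;> nlinarith
  constructor
  · rcases Nat.even_or_odd j with he | ho
    · rw [he.neg_one_pow, one_mul]
      rw [abs_lt] at habs
      linarith [habs.1]
    · rw [ho.neg_one_pow, neg_one_mul, neg_lt_neg_iff]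
      rw [abs_lt] at habs
      linarith [habs.2]
  · rcases Nat.even_or_odd j with he | ho
    · rw [he.neg_one_pow, one_mul]
      have hj2' : 2 ≤ j := by
        rcases he with ⟨t, ht⟩
        omega
      exact cos_helper m j hm hj2' (by omega)
    · rw [ho.neg_one_pow, neg_one_mul]
      have h1 : -Real.cos (Real.pi*j/(m:ℝ)) = Real.cos (Real.pi - Real.pi*j/(m:ℝ)) := by
        rw [Real.cos_pi_sub]
      have h2 : Real.pi - Real.pi*j/(m:ℝ) = Real.pi*((m-j:ℕ):ℝ)/(m:ℝ) := by
        have hcast : ((m-j:ℕ):ℝ) = (m:ℝ) - (j:ℝ) := by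
          push_cast [Nat.cast_sub (by omega : j ≤ m)]
          ring
        rw [hcast]
        field_simp
      rw [h1, h2]
      have hmj2 : 2 ≤ m - j := by
        rcases ho with ⟨t, ht⟩
        omega
      exact cos_helper m (m-j) hm hmj2 (by omega)

lemma mu_le (n : ℕ) (hn : 1 ≤ n) (j : ℕ) (hj1 : 1 ≤ j) (hj2 : j ≤ 2*n) :
    (-1/(2*(1 + (-1)^j * Real.cos (Real.pi*j/((2*n+1:ℕ):ℝ)))) : ℝ)
      ≤ -1/(4*Real.cos (Real.pi/((2*n+1:ℕ):ℝ))^2) := by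
  obtain ⟨hb1, hb2⟩ := b_core n hn j hj1 hj2
  have hm : 3 ≤ 2*n+1 := by omega
  have hden := den_eq (2*n+1) hm
  have hcos := cos_m_pos (2*n+1) hm
  set b : ℝ := (-1)^j * Real.cos (Real.pi*j/((2*n+1:ℕ):ℝ)) with hbdef
  have h1 : (0:ℝ) < 2*(1+b) := by linarith
  have h2 : 2*(1+b) ≤ 4*Real.cos (Real.pi/((2*n+1:ℕ):ℝ))^2 := by
    have : 4*Real.cos (Real.pi/((2*n+1:ℕ):ℝ))^2 = 2*(1 + Real.cos (2*Real.pi/((2*n+1:ℕ):ℝ))) := by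
      rw [hden]; ring
    rw [this]
    linarith
  rw [neg_div, neg_div, neg_le_neg_iff]
  exact one_div_le_one_div_of_le h1 h2

lemma mu_eq (n : ℕ) (hn : 1 ≤ n) (j : ℕ) (hj : j = 2 ∨ j = 2*n - 1) :
    (-1/(2*(1 + (-1)^j * Real.cos (Real.pi*j/((2*n+1:ℕ):ℝ)))) : ℝ)
      = -1/(4*Real.cos (Real.pi/((2*n+1:ℕ):ℝ))^2) := by
  have hm : 3 ≤ 2*n+1 := by omega
  have hden := den_eq (2*n+1) hm
  have hb : (-1:ℝ)^j * Real.cos (Real.pi*j/((2*n+1:ℕ):ℝ)) = Real.cos (2*Real.pi/((2*n+1:ℕ):ℝ)) := by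
    rcases hj with rfl | rfl
    · norm_num
      congr 1
      ring
    · have hodd : Odd (2*n-1) := by
        refine ⟨n-1, by omega⟩
      rw [hodd.neg_one_pow, neg_one_mul]
      rw [show Real.pi*((2*n-1:ℕ):ℝ)/((2*n+1:ℕ):ℝ) = Real.pi - 2*Real.pi/((2*n+1:ℕ):ℝ) by
        have h1 : ((2*n-1:ℕ):ℝ) = 2*(n:ℝ) - 1 := by
          push_cast [Nat.cast_sub (by omega : 1 ≤ 2*n)]
          ring
        have h2 : ((2*n+1:ℕ):ℝ) = 2*(n:ℝ) + 1 := by push_cast; ring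
        have h3 : (0:ℝ) < 2*(n:ℝ)+1 := by
          have : (1:ℝ) ≤ n := by exact_mod_cast hn
          linarith
        rw [h1, h2]
        field_simp
        ring]
      rw [Real.cos_pi_sub, neg_neg]
  rw [hb, den_eq (2*n+1) hm]
  ring_nf






lemma zet_abs (m : ℕ) : ‖zet m‖ = 1 := by
  have h : zet m = Complex.exp (((2*Real.pi/m : ℝ) : ℂ) * Complex.I) := by
    unfold zet
    congr 1
    push_cast
    ring
  rw [h, Complex.norm_exp_ofReal_mul_I]

lemma conj_zet (m : ℕ) : (starRingEnd ℂ) (zet m) = (zet m)⁻¹ := by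
  rw [Complex.inv_def, Complex.normSq_eq_norm_sq, zet_abs]
  simp

lemma conj_zet_zpow (m : ℕ) (t : ℤ) :
    (starRingEnd ℂ) (zet m ^ t) = zet m ^ (-t) := by
  rw [map_zpow₀, conj_zet, inv_zpow, ← zpow_neg]

lemma dvd_small (m : ℕ) (a b : ℤ) (ha : 0 ≤ a) (ha2 : a < m) (hb : 0 ≤ b) (hb2 : b < m)
    (h : (m:ℤ) ∣ a - b) : a = b := by
  rcases eq_or_ne a b with h' | h'
  · exact h'
  · exfalso
    have hd : a - b ≠ 0 := sub_ne_zero.mpr h'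
    have h1 := Int.le_of_dvd (abs_pos.mpr hd) ((dvd_abs _ _).mpr h)
    have h2 : |a-b| < m := abs_lt.mpr ⟨by omega, by omega⟩
    omega

noncomputable def Ftr (m : ℕ) (g : ℕ → ℝ) (j : ℕ) : ℂ :=
  ∑ k ∈ range m, (g k : ℂ) * zet m ^ ((j:ℤ)*k)

lemma Ftr_sq (m : ℕ) (g : ℕ → ℝ) (j : ℕ) :
    Ftr m g j * (starRingEnd ℂ) (Ftr m g j)
      = ∑ k ∈ range m, ∑ l ∈ range m, (g k : ℂ) * g l * zet m ^ (((k:ℤ)-l)*j) := by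
  unfold Ftr
  rw [map_sum, Finset.sum_mul_sum]
  apply Finset.sum_congr rfl
  intro k _
  apply Finset.sum_congr rfl
  intro l _
  rw [map_mul, conj_zet_zpow, Complex.conj_ofReal]
  calc (g k : ℂ) * zet m ^ ((j:ℤ)*k) * ((g l : ℂ) * zet m ^ (-((j:ℤ)*l)))
      = (g k : ℂ) * g l * (zet m ^ ((j:ℤ)*k) * zet m ^ (-((j:ℤ)*l))) := by ring
    _ = (g k : ℂ) * g l * zet m ^ (((k:ℤ)-l)*j) := by
        rw [← zpow_add₀ (zet_ne m)]
        congr 1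
        ring

lemma parseval_one (m : ℕ) (hm : m ≠ 0) (g : ℕ → ℝ) :
    ∑ j ∈ range m, Ftr m g j * (starRingEnd ℂ) (Ftr m g j)
      = (m:ℂ) * ∑ k ∈ range m, ((g k : ℂ))^2 := by
  have h1 : ∑ j ∈ range m, Ftr m g j * (starRingEnd ℂ) (Ftr m g j)
      = ∑ k ∈ range m, ∑ l ∈ range m, (g k : ℂ) * g l * ∑ j ∈ range m, zet m ^ (((k:ℤ)-l)*j) := by
    rw [Finset.sum_congr rfl (fun j _ => Ftr_sq m g j)]
    rw [Finset.sum_comm]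
    apply Finset.sum_congr rfl
    intro k _
    rw [Finset.sum_comm]
    apply Finset.sum_congr rfl
    intro l _
    rw [Finset.mul_sum]
  rw [h1, Finset.mul_sum]
  apply Finset.sum_congr rfl
  intro k hk
  rw [Finset.sum_eq_single k]
  · rw [sum_zet m hm, if_pos (by simp)]
    ring
  · intro l hl hne
    rw [sum_zet m hm, if_neg, mul_zero]
    intro hdvd
    have := dvd_small m k l (Int.natCast_nonneg k) (by exact_mod_cast mem_range.mp hk)
      (Int.natCast_nonneg l) (by exact_mod_cast mem_range.mp hl) hdvd
    exact hne (by exact_mod_cast this.symm)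
  · intro h
    exact absurd hk h



lemma r0_dvd (m k l : ℕ) (hm : m ≠ 0) (hk : k < m) :
    (m:ℤ) ∣ (k:ℤ) - l + ((l + m - k) % m : ℕ) := by
  have hk' : k ≤ l + m := by omega
  have h1 : ((l:ℤ)+m-k) % m = (((l + m - k) % m : ℕ) : ℤ) := by
    push_cast
    rw [Nat.cast_sub hk']
    push_cast
    ring_nf
  have hD : (m:ℤ) ∣ ((l:ℤ)+m-k) - (((l + m - k) % m : ℕ) : ℤ) :=
    Int.dvd_self_sub_of_emod_eq h1
  have heq : (k:ℤ) - l + (((l + m - k) % m : ℕ) : ℤ)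
      = m - (((l:ℤ)+m-k) - (((l + m - k) % m : ℕ) : ℤ)) := by ring
  rw [heq]
  exact dvd_sub (dvd_refl _) hD

lemma lam_term (m : ℕ) (g : ℕ → ℝ) (j : ℕ) :
    Lam m j * (Ftr m g j * (starRingEnd ℂ) (Ftr m g j))
      = ∑ k ∈ range m, ∑ l ∈ range m, ∑ r ∈ range m,
          (dd m r : ℂ) * (g k * g l) * zet m ^ (((k:ℤ)-l+r)*j) := by
  rw [Ftr_sq, Finset.mul_sum]
  apply Finset.sum_congr rfl
  intro k _
  rw [Finset.mul_sum]
  apply Finset.sum_congr rfl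
  intro l _
  unfold Lam
  rw [Finset.sum_mul]
  apply Finset.sum_congr rfl
  intro r _
  have h1 : (zet m ^ j)^r = zet m ^ ((j:ℤ)*r) := by
    rw [← pow_mul, ← zpow_natCast]
    push_cast
    ring_nf
  rw [h1]
  calc (dd m r : ℂ) * zet m ^ ((j:ℤ)*r) * ((g k : ℂ) * g l * zet m ^ (((k:ℤ)-l)*j))
      = (dd m r : ℂ) * (g k * g l) * (zet m ^ ((j:ℤ)*r) * zet m ^ (((k:ℤ)-l)*j)) := by ring
    _ = (dd m r : ℂ) * (g k * g l) * zet m ^ (((k:ℤ)-l+r)*j) := by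
        rw [← zpow_add₀ (zet_ne m)]
        congr 1
        ring

lemma parseval_D (m : ℕ) (hm : m ≠ 0) (g : ℕ → ℝ) :
    ∑ j ∈ range m, Lam m j * (Ftr m g j * (starRingEnd ℂ) (Ftr m g j))
      = (m:ℂ) * ∑ k ∈ range m, ∑ l ∈ range m, (dd m ((l + m - k) % m) : ℂ) * g k * g l := by
  rw [Finset.sum_congr rfl (fun j _ => lam_term m g j)]
  rw [Finset.sum_comm]
  rw [Finset.mul_sum]
  apply Finset.sum_congr rfl
  intro k hk
  rw [Finset.sum_comm, Finset.mul_sum]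
  apply Finset.sum_congr rfl
  intro l hl
  rw [Finset.sum_comm]
  have hstep : ∀ r ∈ range m,
      ∑ j ∈ range m, (dd m r : ℂ) * (g k * g l) * zet m ^ (((k:ℤ)-l+r)*j)
        = (dd m r : ℂ) * (g k * g l) * (if (m:ℤ) ∣ ((k:ℤ)-l+r) then (m:ℂ) else 0) := by
    intro r _
    rw [← Finset.mul_sum, sum_zet m hm]
  rw [Finset.sum_congr rfl hstep]
  rw [Finset.sum_eq_single ((l + m - k) % m)]
  · rw [if_pos (r0_dvd m k l hm (mem_range.mp hk))]
    ring
  · intro r hr hne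
    rw [if_neg, mul_zero]
    intro hdvd
    have hd2 := r0_dvd m k l hm (mem_range.mp hk)
    have hsub : (m:ℤ) ∣ (r:ℤ) - (((l + m - k) % m : ℕ) : ℤ) := by
      have : (r:ℤ) - (((l + m - k) % m : ℕ) : ℤ)
          = ((k:ℤ)-l+r) - ((k:ℤ)-l+(((l + m - k) % m : ℕ) : ℤ)) := by ring
      rw [this]
      exact dvd_sub hdvd hd2
    have h5 : ((r:ℕ):ℤ) = (((l + m - k) % m : ℕ) : ℤ) := dvd_small m (r:ℤ) (((l + m - k) % m : ℕ) : ℤ)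
      (Int.natCast_nonneg r)
      (by exact_mod_cast mem_range.mp hr) (Int.natCast_nonneg _)
      (by exact_mod_cast Nat.mod_lt _ (show 0 < m by omega)) hsub
    exact hne (by exact_mod_cast h5)
  · intro h
    exact absurd (mem_range.mpr (Nat.mod_lt _ (by omega))) h

lemma dvd_small0 (m : ℕ) (x : ℤ) (h1 : -(m:ℤ) < x) (h2 : x < m) (h : (m:ℤ) ∣ x) : x = 0 := by
  rcases h with ⟨c, rfl⟩
  have hm0 : (0:ℤ) ≤ m := Int.natCast_nonneg m
  rcases lt_trichotomy c 0 with hc | hc | hc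
  · exfalso
    have : (m:ℤ)*c ≤ m*(-1) := mul_le_mul_of_nonneg_left (by omega) hm0
    omega
  · rw [hc, mul_zero]
  · exfalso
    have : (m:ℤ)*1 ≤ m*c := mul_le_mul_of_nonneg_left (by omega) hm0
    omega

lemma not_dvd_two (m : ℕ) (hm : 3 ≤ m) : ¬ ((m:ℤ) ∣ 2) := by
  intro h
  have := Int.le_of_dvd (by norm_num) h
  omega

lemma not_dvd_four (n : ℕ) (hn : 1 ≤ n) : ¬ (((2*n+1:ℕ):ℤ) ∣ 4) := by
  intro h
  have := Int.le_of_dvd (by norm_num) h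
  have hn1 : n = 1 := by omega
  subst hn1
  norm_num at h

lemma zet_zpow_exp (m : ℕ) (hm : m ≠ 0) (t : ℕ) :
    zet m ^ ((t:ℤ)) = Complex.exp (((2*Real.pi*t/m : ℝ) : ℂ) * Complex.I) := by
  rw [zpow_natCast, zet, ← Complex.exp_nat_mul]
  congr 1
  have hmC : (m:ℂ) ≠ 0 := Nat.cast_ne_zero.mpr hm
  push_cast
  field_simp

lemma cos_as_zet (m : ℕ) (hm : m ≠ 0) (t : ℕ) :
    ((Real.cos (2*Real.pi*(t:ℝ)/m) : ℝ) : ℂ)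
      = (zet m ^ ((t:ℤ)) + zet m ^ (-(t:ℤ)))/2 := by
  have h1 : zet m ^ (-(t:ℤ)) = (starRingEnd ℂ) (zet m ^ ((t:ℤ))) := (conj_zet_zpow m t).symm
  rw [h1, Complex.add_conj]
  have h2 : (zet m ^ ((t:ℤ))).re = Real.cos (2*Real.pi*t/m) := by
    rw [zet_zpow_exp m hm t]
    exact Complex.exp_ofReal_mul_I_re _
  rw [h2]
  push_cast
  ring

lemma sum_cos (m t : ℕ) (hm : m ≠ 0) (h : ¬ ((m:ℤ) ∣ (t:ℤ))) :
    ∑ k ∈ range m, Real.cos (2*Real.pi*((t*k:ℕ):ℝ)/m) = 0 := by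
  have hC : ((∑ k ∈ range m, Real.cos (2*Real.pi*((t*k:ℕ):ℝ)/m) : ℝ) : ℂ) = 0 := by
    rw [Complex.ofReal_sum]
    have e1 : ∀ k ∈ range m, ((Real.cos (2*Real.pi*((t*k:ℕ):ℝ)/m) : ℝ) : ℂ)
        = (zet m ^ ((t:ℤ)*k) + zet m ^ ((-(t:ℤ))*k))/2 := by
      intro k _
      rw [cos_as_zet m hm (t*k)]
      congr 3 <;> push_cast <;> ring_nf
    rw [Finset.sum_congr rfl e1]
    have e2 : ∑ k ∈ range m, (zet m ^ ((t:ℤ)*k) + zet m ^ ((-(t:ℤ))*k))/2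
        = ((∑ k ∈ range m, zet m ^ ((t:ℤ)*k)) + ∑ k ∈ range m, zet m ^ ((-(t:ℤ))*k))/2 := by
      rw [← Finset.sum_add_distrib, Finset.sum_div]
    rw [e2, sum_zet m hm, sum_zet m hm, if_neg h, if_neg (by rwa [dvd_neg])]
    norm_num
  exact_mod_cast hC

lemma main_bound (n : ℕ) (hn : 1 ≤ n) (g : ℕ → ℝ)
    (hsum : ∑ k ∈ range (2*n+1), g k = 0)
    (hnorm : ∑ k ∈ range (2*n+1), (g k)^2 = 1) :
    ∑ k ∈ range (2*n+1), ∑ l ∈ range (2*n+1),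
        (dd (2*n+1) ((l + (2*n+1) - k) % (2*n+1)) : ℝ) * g k * g l
      ≤ -1/(4*Real.cos (Real.pi/((2*n+1:ℕ):ℝ))^2) := by
  set m : ℕ := 2*n+1 with hmdef
  have hm0 : m ≠ 0 := by omega
  set B : ℝ := -1/(4*Real.cos (Real.pi/((m:ℕ):ℝ))^2) with hB
  set Q : ℝ := ∑ k ∈ range m, ∑ l ∈ range m, (dd m ((l + m - k) % m) : ℝ) * g k * g l with hQ
  set ν : ℕ → ℝ := fun j => Complex.normSq (Ftr m g j) with hν
  -- complex Parseval
  have hPD := parseval_D m hm0 g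
  have hQC : ∑ k ∈ range m, ∑ l ∈ range m, (dd m ((l + m - k) % m) : ℂ) * (g k : ℂ) * (g l : ℂ)
      = ((Q:ℝ):ℂ) := by
    rw [hQ]
    push_cast
    rfl
  rw [hQC] at hPD
  -- F 0 = 0
  have hF0 : Ftr m g 0 = 0 := by
    unfold Ftr
    have : ∀ k ∈ range m, (g k : ℂ) * zet m ^ (((0:ℕ):ℤ)*k) = (g k : ℂ) := by
      intro k _
      norm_num
    rw [Finset.sum_congr rfl this, ← Complex.ofReal_sum, hsum, Complex.ofReal_zero]
  -- split the j-sum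
  have hsplit : ∑ j ∈ range m, Lam m j * (Ftr m g j * (starRingEnd ℂ) (Ftr m g j))
      = ∑ j ∈ Ico 1 m, Lam m j * (Ftr m g j * (starRingEnd ℂ) (Ftr m g j)) := by
    rw [Finset.range_eq_Ico, Finset.sum_eq_sum_Ico_succ_bot (by omega : 0 < m)]
    rw [hF0]
    simp
  have hreal : ∀ j ∈ Ico 1 m,
      Lam m j * (Ftr m g j * (starRingEnd ℂ) (Ftr m g j))
        = (((-1/(2*(1 + (-1)^j * Real.cos (Real.pi*j/((m:ℕ):ℝ)))) * ν j : ℝ)) : ℂ) := by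
    intro j hj
    have hj' := Finset.mem_Ico.mp hj
    rw [lam_real n hn j hj'.1 (by omega), Complex.mul_conj]
    push_cast [hν, hmdef]
    ring
  rw [hsplit, Finset.sum_congr rfl hreal, ← Complex.ofReal_sum] at hPD
  have hQB : (m:ℝ) * Q = ∑ j ∈ Ico 1 m,
      (-1/(2*(1 + (-1)^j * Real.cos (Real.pi*j/((m:ℕ):ℝ))))) * ν j := by
    have := hPD.symm
    rw [show ((m:ℕ):ℂ) * ((Q:ℝ):ℂ) = (((m:ℝ) * Q : ℝ) : ℂ) by push_cast; ring] at this
    exact_mod_cast this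
  -- Parseval one
  have hP1 := parseval_one m hm0 g
  have hν1 : ∑ j ∈ range m, ν j = (m:ℝ) := by
    have h1 : ∀ j ∈ range m, Ftr m g j * (starRingEnd ℂ) (Ftr m g j) = ((ν j : ℝ) : ℂ) := by
      intro j _
      rw [Complex.mul_conj]
    rw [Finset.sum_congr rfl h1, ← Complex.ofReal_sum] at hP1
    have h2 : ((m:ℕ):ℂ) * ∑ k ∈ range m, ((g k:ℝ):ℂ)^2 = (((m:ℝ) * 1 : ℝ) : ℂ) := by
      rw [show ∑ k ∈ range m, ((g k:ℝ):ℂ)^2 = ((∑ k ∈ range m, (g k)^2 : ℝ) : ℂ) by push_cast; rfl]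
      rw [hnorm]
      push_cast
      ring
    rw [h2] at hP1
    have := Complex.ofReal_inj.mp hP1
    linarith [this]
  have hνIco : ∑ j ∈ Ico 1 m, ν j = (m:ℝ) := by
    have : ∑ j ∈ range m, ν j = ν 0 + ∑ j ∈ Ico 1 m, ν j := by
      rw [Finset.range_eq_Ico, Finset.sum_eq_sum_Ico_succ_bot (by omega : 0 < m)]
    have hν0 : ν 0 = 0 := by
      rw [hν]
      simp only [hF0]
      simp
    rw [hν1, hν0] at this
    linarith
  -- bound
  have hbound : ∑ j ∈ Ico 1 m,
      (-1/(2*(1 + (-1)^j * Real.cos (Real.pi*j/((m:ℕ):ℝ))))) * ν j ≤ B * ∑ j ∈ Ico 1 m, ν j := by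
    rw [Finset.mul_sum]
    apply Finset.sum_le_sum
    intro j hj
    have hj' := Finset.mem_Ico.mp hj
    have hμ := mu_le n hn j hj'.1 (by omega)
    have hν0 : 0 ≤ ν j := Complex.normSq_nonneg _
    exact mul_le_mul_of_nonneg_right hμ hν0
  rw [hνIco] at hbound
  rw [← hQB] at hbound
  have hmpos : (0:ℝ) < m := by exact_mod_cast (by omega : 0 < m)
  have : (m:ℝ) * Q ≤ m * B := by linarith [hbound]
  exact le_of_mul_le_mul_left this hmpos

noncomputable def gfun (n k : ℕ) : ℝ :=
  Real.sqrt (2/((2*n+1:ℕ):ℝ)) * Real.cos (2*Real.pi*((2*k:ℕ):ℝ)/((2*n+1:ℕ):ℝ))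

lemma gfun_sum (n : ℕ) (hn : 1 ≤ n) : ∑ k ∈ range (2*n+1), gfun n k = 0 := by
  unfold gfun
  rw [← Finset.mul_sum, sum_cos (2*n+1) 2 (by omega) (not_dvd_two (2*n+1) (by omega)), mul_zero]

lemma gfun_sq (n : ℕ) (hn : 1 ≤ n) : ∑ k ∈ range (2*n+1), (gfun n k)^2 = 1 := by
  set m : ℕ := 2*n+1 with hmdef
  have hm0 : m ≠ 0 := by omega
  have hmR : ((m:ℕ):ℝ) ≠ 0 := Nat.cast_ne_zero.mpr hm0
  have hmpos : (0:ℝ) < m := by exact_mod_cast (by omega : 0 < m)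
  have hA2 : Real.sqrt (2/((m:ℕ):ℝ))^2 = 2/m := Real.sq_sqrt (by positivity)
  have hterm : ∀ k ∈ range m, (gfun n k)^2
      = 1/(m:ℝ) + (1/(m:ℝ)) * Real.cos (2*Real.pi*((4*k:ℕ):ℝ)/m) := by
    intro k _
    unfold gfun
    rw [mul_pow, hA2, Real.cos_sq]
    have h2θ : 2*(2*Real.pi*((2*k:ℕ):ℝ)/m) = 2*Real.pi*((4*k:ℕ):ℝ)/m := by
      push_cast
      ring
    rw [h2θ]
    field_simp
  rw [Finset.sum_congr rfl hterm, Finset.sum_add_distrib, Finset.sum_const,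
    ← Finset.mul_sum, sum_cos m 4 hm0 (not_dvd_four n hn), mul_zero, add_zero,
    Finset.card_range]
  simp only [nsmul_eq_mul]
  field_simp

lemma gfun_Q (n : ℕ) (hn : 1 ≤ n) :
    ∑ k ∈ range (2*n+1), ∑ l ∈ range (2*n+1),
        (dd (2*n+1) ((l + (2*n+1) - k) % (2*n+1)) : ℝ) * gfun n k * gfun n l
      = -1/(4*Real.cos (Real.pi/((2*n+1:ℕ):ℝ))^2) := by
  set m : ℕ := 2*n+1 with hmdef
  have hm0 : m ≠ 0 := by omega
  have hm3 : 3 ≤ m := by omega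
  have hmR : ((m:ℕ):ℝ) ≠ 0 := Nat.cast_ne_zero.mpr hm0
  set A : ℝ := Real.sqrt (2/((m:ℕ):ℝ)) with hA
  have hA2 : A^2 = 2/m := Real.sq_sqrt (by positivity)
  set B : ℝ := -1/(4*Real.cos (Real.pi/((m:ℕ):ℝ))^2) with hB
  set Q : ℝ := ∑ k ∈ range m, ∑ l ∈ range m,
      (dd m ((l + m - k) % m) : ℝ) * gfun n k * gfun n l with hQ
  -- characterizations
  have hc1 : ∀ j : ℕ, j < m → ((m:ℤ) ∣ (j:ℤ)+2 ↔ j = m-2) := by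
    intro j hj
    constructor
    · intro h
      have hx : (m:ℤ) ∣ ((j:ℤ)+2-m) := by
        refine dvd_sub h ⟨1, by ring⟩
      have := dvd_small0 m ((j:ℤ)+2-m) (by omega) (by omega) hx
      omega
    · intro h
      refine ⟨1, by omega⟩
  have hc2 : ∀ j : ℕ, j < m → ((m:ℤ) ∣ (j:ℤ)-2 ↔ j = 2) := by
    intro j hj
    constructor
    · intro h
      have := dvd_small0 m ((j:ℤ)-2) (by omega) (by omega) h
      omega
    · intro h
      refine ⟨0, by omega⟩
  -- Fourier coefficients
  have hgC : ∀ k : ℕ, ((gfun n k : ℝ):ℂ)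
      = (A:ℂ)/2 * (zet m ^ ((2:ℤ)*k) + zet m ^ ((-2:ℤ)*k)) := by
    intro k
    unfold gfun
    rw [Complex.ofReal_mul, cos_as_zet m hm0 (2*k)]
    have e1 : (((2*k:ℕ):ℕ):ℤ) = (2:ℤ)*k := by push_cast; ring
    rw [e1, show -((2:ℤ)*k) = (-2:ℤ)*k by ring, ← hmdef]
    ring
  have hFj : ∀ j : ℕ, Ftr m (gfun n) j
      = (A:ℂ)/2 * ((if (m:ℤ) ∣ (j:ℤ)+2 then (m:ℂ) else 0) + (if (m:ℤ) ∣ (j:ℤ)-2 then (m:ℂ) else 0)) := by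
    intro j
    unfold Ftr
    have hterm : ∀ k ∈ range m, ((gfun n k : ℝ):ℂ) * zet m ^ ((j:ℤ)*k)
        = (A:ℂ)/2 * (zet m ^ (((j:ℤ)+2)*k) + zet m ^ (((j:ℤ)-2)*k)) := by
      intro k _
      rw [hgC k]
      have e1 : zet m ^ ((2:ℤ)*k) * zet m ^ ((j:ℤ)*k) = zet m ^ (((j:ℤ)+2)*k) := by
        rw [← zpow_add₀ (zet_ne m)]
        congr 1
        ring
      have e2 : zet m ^ ((-2:ℤ)*k) * zet m ^ ((j:ℤ)*k) = zet m ^ (((j:ℤ)-2)*k) := by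
        rw [← zpow_add₀ (zet_ne m)]
        congr 1
        ring
      calc (A:ℂ)/2 * (zet m ^ ((2:ℤ)*k) + zet m ^ ((-2:ℤ)*k)) * zet m ^ ((j:ℤ)*k)
          = (A:ℂ)/2 * (zet m ^ ((2:ℤ)*k) * zet m ^ ((j:ℤ)*k) + zet m ^ ((-2:ℤ)*k) * zet m ^ ((j:ℤ)*k)) := by
            ring
        _ = (A:ℂ)/2 * (zet m ^ (((j:ℤ)+2)*k) + zet m ^ (((j:ℤ)-2)*k)) := by rw [e1, e2]
    rw [Finset.sum_congr rfl hterm]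
    rw [← Finset.mul_sum, Finset.sum_add_distrib, sum_zet m hm0, sum_zet m hm0]
  -- the j-sum reduces to {2, m-2}
  have hPD := parseval_D m hm0 (gfun n)
  have hne : (2:ℕ) ≠ m - 2 := by omega
  have hsub : ({2, m-2} : Finset ℕ) ⊆ range m := by
    intro x hx
    simp only [Finset.mem_insert, Finset.mem_singleton] at hx
    rcases hx with rfl | rfl <;> exact Finset.mem_range.mpr (by omega)
  have hzero : ∀ j ∈ range m, j ∉ ({2, m-2} : Finset ℕ) →
      Lam m j * (Ftr m (gfun n) j * (starRingEnd ℂ) (Ftr m (gfun n) j)) = 0 := by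
    intro j hjm hjs
    simp only [Finset.mem_insert, Finset.mem_singleton, not_or] at hjs
    have hF : Ftr m (gfun n) j = 0 := by
      rw [hFj j, if_neg, if_neg]
      · norm_num
      · rw [hc2 j (Finset.mem_range.mp hjm)]
        exact hjs.1
      · rw [hc1 j (Finset.mem_range.mp hjm)]
        exact hjs.2
    rw [hF]
    simp
  rw [← Finset.sum_subset hsub hzero, Finset.sum_pair hne] at hPD
  -- evaluate the two terms
  have hF2 : Ftr m (gfun n) 2 = ((A*m/2 : ℝ) : ℂ) := by
    rw [hFj 2, if_neg, if_pos]
    · push_cast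
      ring
    · norm_num
    · rw [hc1 2 (by omega)]
      omega
  have hFm2 : Ftr m (gfun n) (m-2) = ((A*m/2 : ℝ) : ℂ) := by
    rw [hFj (m-2), if_pos, if_neg]
    · push_cast
      ring
    · rw [hc2 (m-2) (by omega)]
      omega
    · rw [hc1 (m-2) (by omega)]
  have hLam2 : Lam m 2 = ((B:ℝ):ℂ) := by
    rw [lam_real n hn 2 (by omega) (by omega), mu_eq n hn 2 (Or.inl rfl)]
  have hLamm2 : Lam m (m-2) = ((B:ℝ):ℂ) := by
    have h1 : m - 2 = 2*n - 1 := by omega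
    rw [h1, lam_real n hn (2*n-1) (by omega) (by omega), mu_eq n hn (2*n-1) (Or.inr rfl)]
  rw [hF2, hFm2, hLam2, hLamm2, Complex.conj_ofReal] at hPD
  -- convert to real
  have hQC : ∑ k ∈ range m, ∑ l ∈ range m,
      (dd m ((l + m - k) % m) : ℂ) * (gfun n k : ℂ) * (gfun n l : ℂ) = ((Q:ℝ):ℂ) := by
    rw [hQ]
    push_cast
    rfl
  rw [hQC] at hPD
  have hreal : (m:ℝ) * Q = B * (A*m/2 * (A*m/2)) + B * (A*m/2 * (A*m/2)) := by
    have := hPD.symm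
    rw [show ((m:ℕ):ℂ) * ((Q:ℝ):ℂ) = (((m:ℝ)*Q : ℝ):ℂ) by push_cast; ring,
      show ((B:ℝ):ℂ) * (((A*m/2 : ℝ):ℂ) * ((A*m/2 : ℝ):ℂ)) + ((B:ℝ):ℂ) * (((A*m/2 : ℝ):ℂ) * ((A*m/2 : ℝ):ℂ))
        = ((B * (A*m/2 * (A*m/2)) + B * (A*m/2 * (A*m/2)) : ℝ) : ℂ) by push_cast; ring] at this
    exact_mod_cast this
  have hAm : A*m/2 * (A*m/2) = (m:ℝ)/2 := by
    have : A*m/2 * (A*m/2) = A^2 * m^2/4 := by ring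
    rw [this, hA2]
    field_simp
    ring
  rw [hAm] at hreal
  have hmpos : (0:ℝ) < m := by exact_mod_cast (by omega : 0 < m)
  have : (m:ℝ) * Q = m * B := by rw [hreal]; ring
  exact mul_left_cancel₀ (ne_of_gt hmpos) this

lemma conv (m : ℕ) (g : ℕ → ℝ) (f : Fin m → ℝ) (hfg : ∀ i : Fin m, f i = g i.val) :
    (∑ i, f i = ∑ k ∈ range m, g k) ∧
    (∑ i, f i^2 = ∑ k ∈ range m, (g k)^2) ∧
    (∑ i, ∑ j, (cycDist m i j : ℝ) * f i * f j
      = ∑ k ∈ range m, ∑ l ∈ range m, (dd m ((l + m - k) % m) : ℝ) * g k * g l) := by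
  refine ⟨?_, ?_, ?_⟩
  · rw [Finset.sum_congr rfl (fun i _ => hfg i)]
    exact Fin.sum_univ_eq_sum_range g m
  · rw [Finset.sum_congr rfl (fun i _ => by rw [hfg i] : ∀ i ∈ Finset.univ, f i ^2 = (fun k => (g k)^2) i.val)]
    exact Fin.sum_univ_eq_sum_range (fun k => (g k)^2) m
  · have hinner : ∀ i : Fin m, ∑ j, (cycDist m i j : ℝ) * f i * f j
        = (fun k => ∑ l ∈ range m, (dd m ((l + m - k) % m) : ℝ) * g k * g l) i.val := by
      intro i
      have h1 : ∀ j : Fin m, (cycDist m i j : ℝ) * f i * f j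
          = (fun l => (dd m ((l + m - i.val) % m) : ℝ) * g i.val * g l) j.val := by
        intro j
        simp only
        rw [cyc_eq m i j, hfg i, hfg j]
      rw [Finset.sum_congr rfl (fun j _ => h1 j)]
      exact Fin.sum_univ_eq_sum_range (fun l => (dd m ((l + m - i.val) % m) : ℝ) * g i.val * g l) m
    rw [Finset.sum_congr rfl (fun i _ => hinner i)]
    exact Fin.sum_univ_eq_sum_range
      (fun k => ∑ l ∈ range m, (dd m ((l + m - k) % m) : ℝ) * g k * g l) m

end QECaux

/-- QEC(C_{2n+1}) = -1/(4 cos²(π/(2n+1))) for every n ≥ 1. -/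
theorem qec_odd_cycle (n : ℕ) (hn : 1 ≤ n) :
    IsGreatest {x : ℝ | ∃ f : Fin (2*n+1) → ℝ,
      (∑ i, f i ^ 2) = 1 ∧ (∑ i, f i) = 0 ∧
      x = ∑ i, ∑ j, (cycDist (2*n+1) i j : ℝ) * f i * f j}
      (-1/(4 * Real.cos (Real.pi/(2*n+1)) ^ 2)) := by
  have hBeq : -1/(4 * Real.cos (Real.pi/(2*(n:ℝ)+1)) ^ 2)
      = -1/(4*Real.cos (Real.pi/((2*n+1:ℕ):ℝ))^2) := by
    norm_num
  constructor
  · -- membership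
    refine ⟨fun i => QECaux.gfun n i.val, ?_, ?_, ?_⟩
    · obtain ⟨h1, h2, h3⟩ := QECaux.conv (2*n+1) (QECaux.gfun n) (fun i => QECaux.gfun n i.val)
        (fun i => rfl)
      rw [h2]
      exact QECaux.gfun_sq n hn
    · obtain ⟨h1, h2, h3⟩ := QECaux.conv (2*n+1) (QECaux.gfun n) (fun i => QECaux.gfun n i.val)
        (fun i => rfl)
      rw [h1]
      exact QECaux.gfun_sum n hn
    · obtain ⟨h1, h2, h3⟩ := QECaux.conv (2*n+1) (QECaux.gfun n) (fun i => QECaux.gfun n i.val)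
        (fun i => rfl)
      rw [h3, QECaux.gfun_Q n hn]
      push_cast
      norm_num
  · -- upper bound
    rintro x ⟨f, hf1, hf2, rfl⟩
    set g : ℕ → ℝ := fun k => if h : k < 2*n+1 then f ⟨k, h⟩ else 0 with hg
    have hfg : ∀ i : Fin (2*n+1), f i = g i.val := by
      intro i
      rw [hg]
      simp only [i.isLt, dif_pos]
    obtain ⟨h1, h2, h3⟩ := QECaux.conv (2*n+1) g f hfg
    rw [h3]
    rw [h2] at hf1
    rw [h1] at hf2
    have := QECaux.main_bound n hn g hf2 hf1
    calc ∑ k ∈ Finset.range (2*n+1), ∑ l ∈ Finset.range (2*n+1),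
          (QECaux.dd (2*n+1) ((l + (2*n+1) - k) % (2*n+1)) : ℝ) * g k * g l
        ≤ -1/(4*Real.cos (Real.pi/((2*n+1:ℕ):ℝ))^2) := this
      _ = -1/(4 * Real.cos (Real.pi/(2*(n:ℝ)+1)) ^ 2) := by rw [hBeq]
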